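/- arXiv:1412.2615 — 2 statements merged into one kernel-verified Lean document; each statement's English description precedes it below -/
import Mathlib

section
/- Let Φ be a resonant holomorphic diffeomorphism from V×W ⊂ (ℂ^d/2πℤ^d)×ℂ^n to V'×W' ⊂ (ℂ^d/2πℤ^d)×ℂ^n, tangent to the identity. If R is an analytic resonant vector field on V'×W', then the vector field R∘Φ (the componentwise composition) is resonant. -/
open scoped BigOperators

namespace Brjuno

/-- The ambient space `ℂ^d × ℂ^n` (the `X` variables live in `ℂ^d`, viewed modulo `2πℤ^d`). -/
abbrev E (d n : ℕ) := (Fin d → ℂ) × (Fin n → ℂ)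

/-- A family of Fourier–Taylor coefficients, indexed by `P ∈ ℤ^d` and `Q ∈ ℕ^n`. -/
abbrev Coef (d n : ℕ) := (Fin d → ℤ) → (Fin n → ℕ) → ℂ

variable {d n : ℕ}

/-- `|P| = ∑ |P_j|`. -/
def pnorm (P : Fin d → ℤ) : ℕ := ∑ j, (P j).natAbs

/-- `|Q| = ∑ Q_{j'}`. -/
def qnorm (Q : Fin n → ℕ) : ℕ := ∑ j', Q j'

/-- `i⟨P,ω⟩ + ⟨Q,λ⟩`. -/
noncomputable def eigen (ω : Fin d → ℝ) (lam : Fin n → ℂ) (P : Fin d → ℤ) (Q : Fin n → ℕ) : ℂ :=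
  Complex.I * (∑ j, (P j : ℂ) * (ω j : ℂ)) + ∑ j', (Q j' : ℂ) * lam j'

/-- A coefficient family is resonant if nonzero coefficients occur only at resonances. -/
def ResonantCoef (ω : Fin d → ℝ) (lam : Fin n → ℂ) (c : Coef d n) : Prop :=
  ∀ P Q, c P Q ≠ 0 → eigen ω lam P Q = 0

/-- Resonance condition for the `(d+j')`-th component of a vector field:
`Y_{j'}⁻¹ · f` is a resonant series. -/
def ResonantYCoef (ω : Fin d → ℝ) (lam : Fin n → ℂ) (j' : Fin n) (c : Coef d n) : Prop :=
  ∀ P Q, c P Q ≠ 0 → Q j' ≠ 0 ∧ eigen ω lam P Q = lam j'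

/-- A series has order `k` in `Y` if `c_{P,Q} = 0` whenever `|Q| ≤ k-1`. -/
def CoefHasOrder (k : ℕ) (c : Coef d n) : Prop := ∀ P Q, qnorm Q < k → c P Q = 0

/-- A series has degree `k` in `Y` if `c_{P,Q} = 0` whenever `|Q| > k`. -/
def CoefHasDegree (k : ℕ) (c : Coef d n) : Prop := ∀ P Q, k < qnorm Q → c P Q = 0

/-- Formal Fourier–Taylor series: square-summable Fourier coefficients for each `Q`. -/
def SqSummable (c : Coef d n) : Prop := ∀ Q, Summable fun P : Fin d → ℤ => ‖c P Q‖ ^ 2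

/-- Truncation `T^k` of a series at order `k` in `Y`. -/
noncomputable def trunc (k : ℕ) (c : Coef d n) : Coef d n := fun P Q => if qnorm Q ≤ k then c P Q else 0

/-- The monomial `e^{i⟨P,X⟩} Y^Q`. -/
noncomputable def monomial (P : Fin d → ℤ) (Q : Fin n → ℕ) (z : E d n) : ℂ :=
  Complex.exp (Complex.I * ∑ j, (P j : ℂ) * z.1 j) * ∏ j', z.2 j' ^ Q j'

/-- `X` belongs to the strip `V_r`. -/
def inV (r : ℝ) (X : Fin d → ℂ) : Prop := ∀ j, |(X j).im| < r

/-- `Y` belongs to the polydisc `W_δ`. -/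
def inW (δ : ℝ) (Y : Fin n → ℂ) : Prop := ∀ j', ‖Y j'‖ < δ

/-- The domain `V_r × W_δ`. -/
def domSet (d n : ℕ) (r δ : ℝ) : Set (E d n) := {z | inV r z.1 ∧ inW δ z.2}

/-- The sum of the Fourier–Taylor series with coefficients `c`. -/
noncomputable def realize (c : Coef d n) (z : E d n) : ℂ :=
  ∑' PQ : (Fin d → ℤ) × (Fin n → ℕ), c PQ.1 PQ.2 * monomial PQ.1 PQ.2 z

/-- `f` has the Fourier–Taylor expansion `c` on `V_r × W_δ`. -/
def HasExpansionOn (r δ : ℝ) (f : E d n → ℂ) (c : Coef d n) : Prop :=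
  ∀ z ∈ domSet d n r δ,
    HasSum (fun PQ : (Fin d → ℤ) × (Fin n → ℕ) => c PQ.1 PQ.2 * monomial PQ.1 PQ.2 z) (f z)

/-- Summability of the weighted norm `∑ |c_{P,Q}| e^{r|P|} δ^{|Q|}` (membership in `C^ω_{r,δ}`). -/
def WSummable (r δ : ℝ) (c : Coef d n) : Prop :=
  Summable fun PQ : (Fin d → ℤ) × (Fin n → ℕ) =>
    ‖c PQ.1 PQ.2‖ * Real.exp (r * pnorm PQ.1) * δ ^ qnorm PQ.2

/-- The weighted norm `|c|_{r,δ} = ∑ |c_{P,Q}| e^{r|P|} δ^{|Q|}`. -/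
noncomputable def wnorm (r δ : ℝ) (c : Coef d n) : ℝ :=
  ∑' PQ : (Fin d → ℤ) × (Fin n → ℕ),
    ‖c PQ.1 PQ.2‖ * Real.exp (r * pnorm PQ.1) * δ ^ qnorm PQ.2

/-- Formal product of Fourier–Taylor series (convolution of coefficients). -/
noncomputable def fmul (f g : Coef d n) : Coef d n := fun P Q =>
  ∑' P' : Fin d → ℤ, ∑ Q' ∈ Finset.Iic Q, f P' Q' * g (P - P') (Q - Q')

/-- Formal partial derivative `∂/∂X_j` at the level of coefficients. -/
noncomputable def dXc (j : Fin d) (c : Coef d n) : Coef d n := fun P Q => Complex.I * (P j : ℂ) * c P Q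

/-- Formal partial derivative `∂/∂Y_{j'}` at the level of coefficients. -/
noncomputable def dYc (j' : Fin n) (c : Coef d n) : Coef d n :=
  fun P Q => ((Q j' + 1 : ℕ) : ℂ) * c P (Q + Pi.single j' 1)

/-- A (formal) vector field given by the coefficients of its `d+n` components. -/
structure CVF (d n : ℕ) where
  X : Fin d → Coef d n
  Y : Fin n → Coef d n

noncomputable instance : Add (CVF d n) :=
  ⟨fun F G => ⟨fun j P Q => F.X j P Q + G.X j P Q, fun j' P Q => F.Y j' P Q + G.Y j' P Q⟩⟩

noncomputable instance : Sub (CVF d n) :=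
  ⟨fun F G => ⟨fun j P Q => F.X j P Q - G.X j P Q, fun j' P Q => F.Y j' P Q - G.Y j' P Q⟩⟩

/-- A resonant vector field. -/
def CVF.Resonant (ω : Fin d → ℝ) (lam : Fin n → ℂ) (F : CVF d n) : Prop :=
  (∀ j, ResonantCoef ω lam (F.X j)) ∧ ∀ j', ResonantYCoef ω lam j' (F.Y j')

/-- A vector field of order `k` (first `d` components of order `k`, last `n` of order `k+1`). -/
def CVF.HasOrder (k : ℕ) (F : CVF d n) : Prop :=
  (∀ j, CoefHasOrder k (F.X j)) ∧ ∀ j', CoefHasOrder (k + 1) (F.Y j')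

/-- Truncation `T^k` of a vector field. -/
noncomputable def CVF.trunc (k : ℕ) (F : CVF d n) : CVF d n :=
  ⟨fun j => Brjuno.trunc k (F.X j), fun j' => Brjuno.trunc (k + 1) (F.Y j')⟩

/-- All components belong to `C^ω_{r,δ}`. -/
def CVF.WSummable (r δ : ℝ) (F : CVF d n) : Prop :=
  (∀ j, Brjuno.WSummable r δ (F.X j)) ∧ ∀ j', Brjuno.WSummable r δ (F.Y j')

/-- `‖F‖_{r,δ} ≤ C` componentwise. -/
def CVF.NormLe (r δ : ℝ) (F : CVF d n) (C : ℝ) : Prop :=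
  (∀ j, wnorm r δ (F.X j) ≤ C) ∧ ∀ j', wnorm r δ (F.Y j') ≤ C

/-- A formal vector field (components are formal Fourier–Taylor series). -/
def CVF.Formal (F : CVF d n) : Prop :=
  (∀ j, SqSummable (F.X j)) ∧ ∀ j', SqSummable (F.Y j')

/-- The coefficients of the quasilinear vector field
`S = ∑ ω_j ∂/∂X_j + ∑ λ_{j'} Y_{j'} ∂/∂Y_{j'}`. -/
noncomputable def Scvf (ω : Fin d → ℝ) (lam : Fin n → ℂ) : CVF d n where
  X := fun j P Q => if P = 0 ∧ Q = 0 then (ω j : ℂ) else 0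
  Y := fun j' P Q => if P = 0 ∧ Q = Pi.single j' 1 then lam j' else 0

/-- The coefficients of the vector field `a · S`, for a scalar series `a`. -/
noncomputable def smulS (ω : Fin d → ℝ) (lam : Fin n → ℂ) (a : Coef d n) : CVF d n where
  X := fun j P Q => (ω j : ℂ) * a P Q
  Y := fun j' P Q => if Q j' = 0 then 0 else lam j' * a P (Q - Pi.single j' 1)

/-- The data of a (formal) diffeomorphism `Φ`: the series `Φ_j − X_j` for `j ≤ d`,
and the full series `Φ_{d+j'}` for `1 ≤ j' ≤ n`. -/
structure CDiffeo (d n : ℕ) where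
  X : Fin d → Coef d n
  Y : Fin n → Coef d n

/-- Coefficients of the monomial `Y_{j'}`. -/
noncomputable def idYc (j' : Fin n) : Coef d n := fun P Q => if P = 0 ∧ Q = Pi.single j' 1 then 1 else 0

/-- Truncation `T^k` of a (formal) diffeomorphism. -/
noncomputable def truncD (k : ℕ) (Φ : CDiffeo d n) : CDiffeo d n :=
  ⟨fun j => trunc k (Φ.X j), fun j' => trunc (k + 1) (Φ.Y j')⟩

/-- The map defined by the diffeomorphism data. -/
noncomputable def realizeMap (Φ : CDiffeo d n) (z : E d n) : E d n :=
  (fun j => z.1 j + realize (Φ.X j) z, fun j' => realize (Φ.Y j') z)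

/-- Tangent to the identity: `Φ_j − X_j` has order 1, `Φ_{d+j'} − Y_{j'}` has order 2. -/
def TangentId (Φ : CDiffeo d n) : Prop :=
  (∀ j, CoefHasOrder 1 (Φ.X j)) ∧
    ∀ j', CoefHasOrder 2 fun P Q => Φ.Y j' P Q - idYc j' P Q

/-- A resonant diffeomorphism. -/
def CDiffeo.Resonant (ω : Fin d → ℝ) (lam : Fin n → ℂ) (Φ : CDiffeo d n) : Prop :=
  (∀ j, ResonantCoef ω lam (Φ.X j)) ∧ ∀ j', ResonantYCoef ω lam j' (Φ.Y j')

/-- A formal diffeomorphism: each truncation is an analytic diffeomorphism on some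
neighborhood of `𝕋^d × {0}`. -/
def IsFormalDiffeo (Φ : CDiffeo d n) : Prop :=
  ∀ k, ∃ r δ : ℝ, 0 < r ∧ 0 < δ ∧
    (∀ j, WSummable r δ (trunc k (Φ.X j))) ∧
    (∀ j', WSummable r δ (trunc (k + 1) (Φ.Y j'))) ∧
    Set.InjOn (realizeMap (truncD k Φ)) (domSet d n r δ)

/-- The formal vector field `DΦ · F` (Jacobian of `Φ` applied to `F`). -/
noncomputable def DphiDotF (Φ : CDiffeo d n) (F : CVF d n) : CVF d n where
  X := fun j P Q => F.X j P Q + (∑ m, fmul (dXc m (Φ.X j)) (F.X m) P Q)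
    + ∑ l, fmul (dYc l (Φ.X j)) (F.Y l) P Q
  Y := fun j' P Q => (∑ m, fmul (dXc m (Φ.Y j')) (F.X m) P Q)
    + ∑ l, fmul (dYc l (Φ.Y j')) (F.Y l) P Q

/-- `Φ` formally conjugates the analytic vector field `G` to the formal vector field `F`:
for every `k`, `T^k(D(T^kΦ)·F) = T^k(G ∘ T^kΦ)`. -/
def FormallyConjugates (Φ : CDiffeo d n) (G : CVF d n) (F : CVF d n) : Prop :=
  ∀ k : ℕ, ∃ r' δ' : ℝ, 0 < r' ∧ 0 < δ' ∧
    ∃ c : CVF d n,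
      (∀ j, HasExpansionOn r' δ'
        (fun z => realize (G.X j) (realizeMap (truncD k Φ) z)) (c.X j)) ∧
      (∀ j', HasExpansionOn r' δ'
        (fun z => realize (G.Y j') (realizeMap (truncD k Φ) z)) (c.Y j')) ∧
      CVF.trunc k (DphiDotF (truncD k Φ) F) = CVF.trunc k c

/-- The quasilinear vector field `S` as a map. -/
noncomputable def Sfun (ω : Fin d → ℝ) (lam : Fin n → ℂ) (z : E d n) : E d n :=
  (fun j => (ω j : ℂ), fun j' => lam j' * z.2 j')

/-- The vector field `S + F` as a map, for `F` given by coefficients. -/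
noncomputable def fieldFunS (ω : Fin d → ℝ) (lam : Fin n → ℂ) (F : CVF d n) (z : E d n) :
    E d n :=
  (fun j => (ω j : ℂ) + realize (F.X j) z, fun j' => lam j' * z.2 j' + realize (F.Y j') z)

/-- An analytic vector field, given by coefficients, as a map. -/
noncomputable def fieldFun (F : CVF d n) (z : E d n) : E d n :=
  (fun j => realize (F.X j) z, fun j' => realize (F.Y j') z)

/-- The map `Id + (deviation)`, for deviations in both sets of variables. -/
noncomputable def devMap (devX : Fin d → Coef d n) (devY : Fin n → Coef d n) (z : E d n) :
    E d n :=
  (fun j => z.1 j + realize (devX j) z, fun j' => z.2 j' + realize (devY j') z)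



section Aux

open Complex MeasureTheory
open scoped ENNReal NNReal

attribute [local instance] Measure.Subtype.measureSpace



/-- The fundamental domain `(0, 2π]` as a measure space. -/
abbrev BB : Type := ↥(Set.Ioc (0:ℝ) (2*Real.pi))

instance : IsFiniteMeasure (volume : Measure BB) := by
  constructor
  rw [show (volume : Measure BB) = volume.comap Subtype.val from rfl,
    (MeasurableEmbedding.subtype_coe measurableSet_Ioc).comap_apply]
  rw [Set.image_univ, Subtype.range_coe, Real.volume_Ioc]
  exact ENNReal.ofReal_lt_top

noncomputable def uu (k : ℤ) (x : BB) : ℂ := Complex.exp (Complex.I * k * (x:ℝ))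

lemma uu_mul (a b : ℤ) (x : BB) : uu a x * uu b x = uu (a + b) x := by
  rw [uu, uu, uu, ← Complex.exp_add]
  congr 1
  push_cast
  ring

lemma measurable_uu (k : ℤ) : Measurable (uu k) := by
  apply Complex.measurable_exp.comp
  exact (measurable_const.mul (Complex.measurable_ofReal.comp measurable_subtype_coe))

lemma norm_uu (k : ℤ) (x : BB) : ‖uu k x‖ = 1 := by
  rw [uu, Complex.norm_exp]
  have : (Complex.I * k * (x:ℝ)).re = 0 := by simp [Complex.mul_re]
  rw [this, Real.exp_zero]

lemma integral_uu (k : ℤ) : ∫ x : BB, uu k x = if k = 0 then ((2*Real.pi : ℝ) : ℂ) else 0 := by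
  rw [show (∫ x : BB, uu k x) = ∫ x : ↥(Set.Ioc (0:ℝ) (2*Real.pi)), (fun y : ℝ => Complex.exp (Complex.I * k * y)) ↑x from rfl,
    MeasureTheory.integral_subtype measurableSet_Ioc (fun y : ℝ => Complex.exp (Complex.I * k * y))]
  rw [← intervalIntegral.integral_of_le (by positivity : (0:ℝ) ≤ 2*Real.pi)]
  by_cases hk : k = 0
  · subst hk
    simp [intervalIntegral.integral_const, Complex.real_smul]
  · have hc : Complex.I * k ≠ 0 := by
      simp [Complex.I_ne_zero, Complex.ext_iff]
      exact_mod_cast hk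
    rw [integral_exp_mul_complex hc]
    have h1 : Complex.I * k * ((2*Real.pi : ℝ) : ℂ) = k * (2 * Real.pi * Complex.I) := by
      push_cast; ring
    rw [h1, Complex.exp_int_mul_two_pi_mul_I]
    simp [hk]


lemma volume_BB_univ : (volume : Measure BB) Set.univ = ENNReal.ofReal (2*Real.pi) := by
  rw [show (volume : Measure BB) = volume.comap Subtype.val from rfl,
    (MeasurableEmbedding.subtype_coe measurableSet_Ioc).comap_apply,
    Set.image_univ, Subtype.range_coe, Real.volume_Ioc]
  norm_num

lemma integral_pi_uu {m : ℕ} (k : Fin m → ℤ) :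
    ∫ x : Fin m → BB, ∏ j, uu (k j) (x j)
      = if k = 0 then (((2*Real.pi)^m : ℝ) : ℂ) else 0 := by
  rw [MeasureTheory.volume_pi, MeasureTheory.integral_fintype_prod_eq_prod (fun j x => uu (k j) x)]
  by_cases hk : k = 0
  · subst hk
    simp only [Pi.zero_apply, integral_uu, if_pos rfl, if_true, Finset.prod_const,
      Finset.card_univ, Fintype.card_fin]
    push_cast
    ring
  · rw [if_neg hk]
    obtain ⟨j, hj⟩ := Function.ne_iff.1 hk
    exact Finset.prod_eq_zero (Finset.mem_univ j) (by
      rw [integral_uu, if_neg (by simpa using hj)])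



/-- The torus parameter space. -/
abbrev TT (d n : ℕ) := (Fin d → BB) × (Fin n → BB)

instance : Nonempty BB := ⟨⟨2*Real.pi, by constructor; positivity; exact le_refl _⟩⟩

/-- The torus point with `X = θ₁` (real) and `Y_{j'} = ρ_{j'} e^{iθ₂}`. -/
noncomputable def zpt (ρ : Fin n → ℝ) (θ : TT d n) : E d n :=
  (fun j => ((θ.1 j : ℝ) : ℂ),
   fun j' => (ρ j' : ℂ) * Complex.exp (Complex.I * ((θ.2 j' : ℝ) : ℂ)))

lemma monomial_zpt (P : Fin d → ℤ) (Q : Fin n → ℕ) (ρ : Fin n → ℝ) (θ : TT d n) :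
    monomial P Q (zpt ρ θ)
      = (∏ l, ((ρ l : ℂ)) ^ Q l) *
        ((∏ j, uu (P j) (θ.1 j)) * ∏ j', uu ((Q j' : ℤ)) (θ.2 j')) := by
  rw [monomial, zpt]
  simp only [uu]
  have h1 : Complex.I * ∑ j, (P j : ℂ) * ((θ.1 j : ℝ) : ℂ)
      = ∑ j, Complex.I * ((P j : ℤ) : ℂ) * ((θ.1 j : ℝ) : ℂ) := by
    rw [Finset.mul_sum]; exact Finset.sum_congr rfl (fun j _ => by ring)
  rw [h1, Complex.exp_sum]
  have h2 : ∀ j' : Fin n, ((ρ j' : ℂ) * Complex.exp (Complex.I * ((θ.2 j' : ℝ):ℂ))) ^ Q j'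
      = (ρ j' : ℂ) ^ Q j' * Complex.exp (Complex.I * ((Q j' : ℤ) : ℂ) * ((θ.2 j' : ℝ):ℂ)) := by
    intro j'
    rw [mul_pow, ← Complex.exp_nat_mul]
    congr 2
    push_cast; ring
  simp_rw [h2]
  rw [Finset.prod_mul_distrib]
  ring

lemma norm_monomial_zpt (P : Fin d → ℤ) (Q : Fin n → ℕ) (ρ : Fin n → ℝ)
    (hρ : ∀ l, 0 ≤ ρ l) (θ : TT d n) :
    ‖monomial P Q (zpt ρ θ)‖ = ∏ l, (ρ l) ^ Q l := by
  rw [monomial_zpt, norm_mul, norm_mul, norm_prod, norm_prod, norm_prod]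
  simp only [norm_uu, norm_pow, Complex.norm_real, Finset.prod_const_one, mul_one, one_mul]
  exact Finset.prod_congr rfl fun l _ => by rw [Real.norm_of_nonneg (hρ l)]

/-- The weight `e^{-i⟨P₀,θ₁⟩ - i⟨Q₀,θ₂⟩}`. -/
noncomputable def wgt (P₀ : Fin d → ℤ) (Q₀ : Fin n → ℕ) (θ : TT d n) : ℂ :=
  (∏ j, uu (-(P₀ j)) (θ.1 j)) * ∏ j', uu (-(Q₀ j' : ℤ)) (θ.2 j')

lemma norm_wgt (P₀ : Fin d → ℤ) (Q₀ : Fin n → ℕ) (θ : TT d n) : ‖wgt P₀ Q₀ θ‖ = 1 := by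
  rw [wgt, norm_mul, norm_prod, norm_prod]
  simp only [norm_uu, Finset.prod_const_one, one_mul]

lemma measurable_term (P P₀ : Fin d → ℤ) (Q Q₀ : Fin n → ℕ) (ρ : Fin n → ℝ) (a : ℂ) :
    Measurable (fun θ : TT d n => a * monomial P Q (zpt ρ θ) * wgt P₀ Q₀ θ) := by
  have hu : ∀ (k : ℤ) (j : Fin d), Measurable (fun θ : TT d n => uu k (θ.1 j)) :=
    fun k j => (measurable_uu k).comp ((measurable_pi_apply j).comp measurable_fst)
  have hu' : ∀ (k : ℤ) (j' : Fin n), Measurable (fun θ : TT d n => uu k (θ.2 j')) :=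
    fun k j' => (measurable_uu k).comp ((measurable_pi_apply j').comp measurable_snd)
  have h1 : Measurable (fun θ : TT d n => monomial P Q (zpt ρ θ)) := by
    simp_rw [monomial_zpt]
    exact measurable_const.mul ((Finset.measurable_prod _ (fun j _ => hu _ j)).mul
      (Finset.measurable_prod _ (fun j' _ => hu' _ j')))
  have h2 : Measurable (fun θ : TT d n => wgt P₀ Q₀ θ) := by
    simp only [wgt]
    exact (Finset.measurable_prod _ (fun j _ => hu _ j)).mul
      (Finset.measurable_prod _ (fun j' _ => hu' _ j'))
  exact (measurable_const.mul h1).mul h2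

lemma integral_term (P P₀ : Fin d → ℤ) (Q Q₀ : Fin n → ℕ) (ρ : Fin n → ℝ) (a : ℂ) :
    ∫ θ : TT d n, a * monomial P Q (zpt ρ θ) * wgt P₀ Q₀ θ
      = if P = P₀ ∧ Q = Q₀ then
          a * (∏ l, ((ρ l : ℂ)) ^ Q l) * (((2*Real.pi)^(d+n) : ℝ) : ℂ) else 0 := by
  have key : ∀ θ : TT d n, a * monomial P Q (zpt ρ θ) * wgt P₀ Q₀ θ
      = (a * ∏ l, ((ρ l : ℂ)) ^ Q l) *
        ((∏ j, uu (P j - P₀ j) (θ.1 j)) * ∏ j', uu ((Q j' : ℤ) - (Q₀ j' : ℤ)) (θ.2 j')) := by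
    intro θ
    have e1 : ∏ j, uu (P j - P₀ j) (θ.1 j)
        = (∏ j, uu (P j) (θ.1 j)) * ∏ j, uu (-(P₀ j)) (θ.1 j) := by
      rw [← Finset.prod_mul_distrib]
      exact Finset.prod_congr rfl fun j _ => by rw [uu_mul, sub_eq_add_neg]
    have e2 : ∏ j', uu ((Q j' : ℤ) - (Q₀ j' : ℤ)) (θ.2 j')
        = (∏ j', uu ((Q j' : ℤ)) (θ.2 j')) * ∏ j', uu (-(Q₀ j' : ℤ)) (θ.2 j') := by
      rw [← Finset.prod_mul_distrib]
      exact Finset.prod_congr rfl fun j' _ => by rw [uu_mul, sub_eq_add_neg]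
    rw [monomial_zpt, wgt, e1, e2]
    ring
  simp_rw [key]
  rw [MeasureTheory.integral_const_mul, MeasureTheory.Measure.volume_eq_prod,
    MeasureTheory.integral_prod_mul (f := fun x : Fin d → BB => ∏ j, uu (P j - P₀ j) (x j))
      (g := fun y : Fin n → BB => ∏ j', uu ((Q j' : ℤ) - (Q₀ j' : ℤ)) (y j')),
    integral_pi_uu, integral_pi_uu]
  have hPf : ((fun j => P j - P₀ j) = 0) ↔ P = P₀ := by
    constructor
    · intro h; funext j; have := congrFun h j; simpa [sub_eq_zero] using this
    · intro h; subst h; funext j; simp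
  have hQf : ((fun j' => (Q j' : ℤ) - (Q₀ j' : ℤ)) = 0) ↔ Q = Q₀ := by
    constructor
    · intro h; funext j'; have := congrFun h j'; simp only [Pi.zero_apply, sub_eq_zero] at this
      exact_mod_cast this
    · intro h; subst h; funext j'; simp
  by_cases hP : P = P₀
  · by_cases hQ : Q = Q₀
    · rw [if_pos (hPf.2 hP), if_pos (hQf.2 hQ), if_pos ⟨hP, hQ⟩]
      push_cast; ring
    · rw [if_neg (show ¬((fun j' => ((Q j' : ℤ) - (Q₀ j' : ℤ))) = 0) from fun h => hQ (hQf.1 h)),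
        if_neg (show ¬(P = P₀ ∧ Q = Q₀) from fun h => hQ h.2)]
      ring
  · rw [if_neg (show ¬((fun j => P j - P₀ j) = 0) from fun h => hP (hPf.1 h)),
      if_neg (show ¬(P = P₀ ∧ Q = Q₀) from fun h => hP h.1)]
    ring

lemma volume_TT_univ : (volume : Measure (TT d n)) Set.univ
    = (ENNReal.ofReal (2*Real.pi)) ^ d * (ENNReal.ofReal (2*Real.pi)) ^ n := by
  rw [Measure.volume_eq_prod, ← Set.univ_prod_univ, Measure.prod_prod,
    MeasureTheory.volume_pi, MeasureTheory.volume_pi, Measure.pi_univ, Measure.pi_univ]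
  simp [volume_BB_univ]

lemma extract (a : Coef d n) (ρ : Fin n → ℝ) (hρ : ∀ l, 0 ≤ ρ l) (g : TT d n → ℂ)
    (hg : ∀ θ : TT d n, HasSum
      (fun PQ : (Fin d → ℤ) × (Fin n → ℕ) => a PQ.1 PQ.2 * monomial PQ.1 PQ.2 (zpt ρ θ)) (g θ))
    (P₀ : Fin d → ℤ) (Q₀ : Fin n → ℕ) :
    ∫ θ : TT d n, g θ * wgt P₀ Q₀ θ
      = a P₀ Q₀ * (∏ l, ((ρ l : ℂ)) ^ Q₀ l) * (((2*Real.pi)^(d+n) : ℝ) : ℂ) := by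
  obtain ⟨θ₀⟩ : Nonempty (TT d n) := inferInstance
  have hnorm : ∀ (PQ : (Fin d → ℤ) × (Fin n → ℕ)) (θ : TT d n),
      ‖a PQ.1 PQ.2 * monomial PQ.1 PQ.2 (zpt ρ θ) * wgt P₀ Q₀ θ‖
        = ‖a PQ.1 PQ.2‖ * ∏ l, (ρ l) ^ PQ.2 l := by
    intro PQ θ
    rw [norm_mul, norm_mul, norm_wgt, norm_monomial_zpt _ _ _ hρ, mul_one]
  have hsum0 : Summable (fun PQ : (Fin d → ℤ) × (Fin n → ℕ) =>
      ‖a PQ.1 PQ.2‖ * ∏ l, (ρ l) ^ PQ.2 l) := by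
    refine (summable_norm_iff.2 (hg θ₀).summable).congr fun PQ => ?_
    rw [norm_mul, norm_monomial_zpt _ _ _ hρ]
  have heq : ∀ θ : TT d n, g θ * wgt P₀ Q₀ θ
      = ∑' PQ : (Fin d → ℤ) × (Fin n → ℕ),
          a PQ.1 PQ.2 * monomial PQ.1 PQ.2 (zpt ρ θ) * wgt P₀ Q₀ θ :=
    fun θ => ((hg θ).mul_right (wgt P₀ Q₀ θ)).tsum_eq.symm
  have hVne : (volume : Measure (TT d n)) Set.univ ≠ ⊤ := by
    rw [volume_TT_univ]
    exact ENNReal.mul_ne_top (ENNReal.pow_ne_top ENNReal.ofReal_ne_top) (ENNReal.pow_ne_top ENNReal.ofReal_ne_top)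
  calc ∫ θ : TT d n, g θ * wgt P₀ Q₀ θ
      = ∫ θ : TT d n, ∑' PQ : (Fin d → ℤ) × (Fin n → ℕ),
          a PQ.1 PQ.2 * monomial PQ.1 PQ.2 (zpt ρ θ) * wgt P₀ Q₀ θ := by
        simp_rw [heq]
    _ = ∑' PQ : (Fin d → ℤ) × (Fin n → ℕ),
          ∫ θ : TT d n, a PQ.1 PQ.2 * monomial PQ.1 PQ.2 (zpt ρ θ) * wgt P₀ Q₀ θ := by
        apply MeasureTheory.integral_tsum
        · exact fun PQ => (measurable_term _ _ _ _ _ _).aestronglyMeasurable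
        · have hlin : ∀ PQ : (Fin d → ℤ) × (Fin n → ℕ),
              (∫⁻ θ : TT d n, ‖a PQ.1 PQ.2 * monomial PQ.1 PQ.2 (zpt ρ θ) * wgt P₀ Q₀ θ‖ₑ)
                = ENNReal.ofReal (‖a PQ.1 PQ.2‖ * ∏ l, (ρ l) ^ PQ.2 l)
                    * (volume : Measure (TT d n)) Set.univ := by
            intro PQ
            have : ∀ θ : TT d n,
                ((‖a PQ.1 PQ.2 * monomial PQ.1 PQ.2 (zpt ρ θ) * wgt P₀ Q₀ θ‖ₑ : ℝ≥0∞))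
                  = ENNReal.ofReal (‖a PQ.1 PQ.2‖ * ∏ l, (ρ l) ^ PQ.2 l) := by
              intro θ
              rw [← ofReal_norm, hnorm]
            simp_rw [this]
            rw [MeasureTheory.lintegral_const]
          simp_rw [hlin]
          rw [ENNReal.tsum_mul_right]
          apply ENNReal.mul_ne_top _ hVne
          rw [← ENNReal.ofReal_tsum_of_nonneg (fun PQ => mul_nonneg (norm_nonneg _) (Finset.prod_nonneg fun l _ => pow_nonneg (hρ l) _)) hsum0]
          exact ENNReal.ofReal_ne_top
    _ = a P₀ Q₀ * (∏ l, ((ρ l : ℂ)) ^ Q₀ l) * (((2*Real.pi)^(d+n) : ℝ) : ℂ) := by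
        simp_rw [integral_term]
        rw [tsum_eq_single ((P₀, Q₀) : (Fin d → ℤ) × (Fin n → ℕ))]
        · rw [if_pos ⟨rfl, rfl⟩]
        · intro PQ hPQ
          rw [if_neg]
          rintro ⟨h1, h2⟩
          exact hPQ (Prod.ext h1 h2)


/-- The time-`t` flow of the quasilinear field `S`. -/
noncomputable def flow (ω : Fin d → ℝ) (lam : Fin n → ℂ) (t : ℝ) (z : E d n) : E d n :=
  (fun j => z.1 j + (t : ℂ) * (ω j : ℂ), fun j' => Complex.exp ((t : ℂ) * lam j') * z.2 j')

lemma monomial_flow (ω : Fin d → ℝ) (lam : Fin n → ℂ) (t : ℝ) (P : Fin d → ℤ)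
    (Q : Fin n → ℕ) (z : E d n) :
    monomial P Q (flow ω lam t z)
      = Complex.exp ((t:ℂ) * eigen ω lam P Q) * monomial P Q z := by
  rw [monomial, monomial, flow, eigen]
  have hY : ∀ j' : Fin n, (Complex.exp ((t:ℂ) * lam j') * z.2 j') ^ Q j'
      = Complex.exp (((Q j' : ℕ) : ℂ) * ((t:ℂ) * lam j')) * z.2 j' ^ Q j' := by
    intro j'; rw [mul_pow, ← Complex.exp_nat_mul]
  simp_rw [hY]
  rw [Finset.prod_mul_distrib, ← Complex.exp_sum]
  rw [show ∀ (A B : ℂ) (C : ℂ), A * (B * C) = (A * B) * C from fun A B C => by ring]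
  rw [← Complex.exp_add, ← mul_assoc, ← Complex.exp_add]
  have h2 : ∑ j, (P j : ℂ) * (z.1 j + (t:ℂ) * ((ω j : ℝ) : ℂ))
      = (∑ j, (P j : ℂ) * z.1 j) + (t:ℂ) * ∑ j, (P j : ℂ) * ((ω j : ℝ) : ℂ) := by
    rw [Finset.mul_sum, ← Finset.sum_add_distrib]
    exact Finset.sum_congr rfl fun j _ => by ring
  have h3 : ∑ j' : Fin n, ((Q j' : ℕ) : ℂ) * ((t:ℂ) * lam j')
      = (t:ℂ) * ∑ j' : Fin n, ((Q j' : ℕ) : ℂ) * lam j' := by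
    rw [Finset.mul_sum]
    exact Finset.sum_congr rfl fun j' _ => by ring
  congr 1
  rw [h2, h3]
  ring

lemma realize_flow_res {ω : Fin d → ℝ} {lam : Fin n → ℂ} {c : Coef d n}
    (hc : ResonantCoef ω lam c) (t : ℝ) (z : E d n) :
    realize c (flow ω lam t z) = realize c z := by
  rw [realize, realize]
  apply tsum_congr
  intro PQ
  by_cases h : c PQ.1 PQ.2 = 0
  · rw [h, zero_mul, zero_mul]
  · rw [monomial_flow, hc _ _ h, mul_zero, Complex.exp_zero, one_mul]

lemma realize_flow_resY {ω : Fin d → ℝ} {lam : Fin n → ℂ} {j' : Fin n} {c : Coef d n}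
    (hc : ResonantYCoef ω lam j' c) (t : ℝ) (z : E d n) :
    realize c (flow ω lam t z) = Complex.exp ((t:ℂ) * lam j') * realize c z := by
  rw [realize, realize, ← tsum_mul_left]
  apply tsum_congr
  intro PQ
  by_cases h : c PQ.1 PQ.2 = 0
  · rw [h]; ring
  · rw [monomial_flow, (hc _ _ h).2]; ring

lemma realize_zero_of_Y {ω : Fin d → ℝ} {lam : Fin n → ℂ} {j' : Fin n} {c : Coef d n}
    (hc : ResonantYCoef ω lam j' c) (z : E d n) (hz : z.2 j' = 0) : realize c z = 0 := by
  rw [realize]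
  convert tsum_zero with PQ
  by_cases h : c PQ.1 PQ.2 = 0
  · rw [h, zero_mul]
  · have hQ := (hc _ _ h).1
    rw [monomial]
    have hprod : ∏ l, z.2 l ^ PQ.2 l = 0 :=
      Finset.prod_eq_zero (Finset.mem_univ j') (by rw [hz, zero_pow hQ])
    rw [hprod, mul_zero, mul_zero]

lemma realizeMap_flow {ω : Fin d → ℝ} {lam : Fin n → ℂ} {Φ : CDiffeo d n}
    (hΦ : CDiffeo.Resonant ω lam Φ) (t : ℝ) (z : E d n) :
    realizeMap Φ (flow ω lam t z) = flow ω lam t (realizeMap Φ z) := by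
  refine Prod.ext ?_ ?_
  · funext j
    show (flow ω lam t z).1 j + realize (Φ.X j) (flow ω lam t z)
        = (realizeMap Φ z).1 j + (t:ℂ) * ((ω j : ℝ) : ℂ)
    rw [realize_flow_res (hΦ.1 j)]
    show z.1 j + (t:ℂ) * ((ω j : ℝ):ℂ) + realize (Φ.X j) z
        = z.1 j + realize (Φ.X j) z + (t:ℂ) * ((ω j : ℝ):ℂ)
    ring
  · funext j'
    show realize (Φ.Y j') (flow ω lam t z)
        = Complex.exp ((t:ℂ) * lam j') * (realizeMap Φ z).2 j'
    rw [realize_flow_resY (hΦ.2 j')]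
    rfl

lemma eq_of_exp_eq (μ ν : ℂ) (t₀ : ℝ) (ht₀ : 0 < t₀)
    (h : ∀ t : ℝ, |t| ≤ t₀ → Complex.exp ((t:ℂ) * μ) = Complex.exp ((t:ℂ) * ν)) : μ = ν := by
  have hev : (fun t : ℝ => Complex.exp ((t:ℂ) * μ))
      =ᶠ[nhds (0:ℝ)] fun t : ℝ => Complex.exp ((t:ℂ) * ν) := by
    have hmem : Set.Ioo (-t₀) t₀ ∈ nhds (0:ℝ) := Ioo_mem_nhds (by linarith) ht₀
    filter_upwards [hmem] with t ht
    exact h t (le_of_lt (abs_lt.2 ⟨ht.1, ht.2⟩))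
  have hd : ∀ ξ : ℂ, HasDerivAt (fun t : ℝ => Complex.exp ((t:ℂ) * ξ)) ξ 0 := by
    intro ξ
    have h1 : HasDerivAt (fun y : ℂ => y * ξ) ξ (((0:ℝ):ℂ)) := by
      simpa using (hasDerivAt_id (((0:ℝ):ℂ))).mul_const ξ
    have h3 := (h1.comp_ofReal).cexp
    simpa using h3
  have hde := hev.deriv_eq
  rwa [(hd μ).deriv, (hd ν).deriv] at hde


lemma flow_zero (ω : Fin d → ℝ) (lam : Fin n → ℂ) (z : E d n) : flow ω lam 0 z = z := by
  refine Prod.ext ?_ ?_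
  · funext j; show z.1 j + ((0:ℝ):ℂ) * _ = z.1 j; simp
  · funext j'; show Complex.exp (((0:ℝ):ℂ) * lam j') * z.2 j' = z.2 j'; simp

lemma norm_exp_I_mul_ofReal (x : ℝ) : ‖Complex.exp (Complex.I * (x:ℂ))‖ = 1 := by
  rw [Complex.norm_exp]
  have : (Complex.I * (x:ℂ)).re = 0 := by simp [Complex.mul_re]
  rw [this, Real.exp_zero]


/-- Lemma `resonantcomp`: composing a resonant analytic vector field with
a resonant holomorphic diffeomorphism tangent to the identity yields a resonant
vector field. -/
theorem resonant_composition (d n : ℕ) (ω : Fin d → ℝ) (lam : Fin n → ℂ)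
    (r δ r' δ' : ℝ) (hr : 0 < r) (hδ : 0 < δ) (hr' : 0 < r') (hδ' : 0 < δ')
    (Φ : CDiffeo d n)
    (hΦsumX : ∀ j, WSummable r δ (Φ.X j)) (hΦsumY : ∀ j', WSummable r δ (Φ.Y j'))
    (hΦdiff : DifferentiableOn ℂ (realizeMap Φ) (domSet d n r δ))
    (hΦinj : Set.InjOn (realizeMap Φ) (domSet d n r δ))
    (hΦmaps : Set.MapsTo (realizeMap Φ) (domSet d n r δ) (domSet d n r' δ'))
    (hΦres : CDiffeo.Resonant ω lam Φ) (hΦtan : TangentId Φ)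
    (R : CVF d n) (hRsum : CVF.WSummable r' δ' R) (hRres : CVF.Resonant ω lam R)
    (r'' δ'' : ℝ) (hr'' : 0 < r'') (hδ'' : 0 < δ'') (hr''le : r'' ≤ r) (hδ''le : δ'' ≤ δ)
    (e : CVF d n)
    (heX : ∀ j, HasExpansionOn r'' δ''
      (fun z => realize (R.X j) (realizeMap Φ z)) (e.X j))
    (heY : ∀ j', HasExpansionOn r'' δ''
      (fun z => realize (R.Y j') (realizeMap Φ z)) (e.Y j')) :
    CVF.Resonant ω lam e := by
  classical
  -- constants
  set L : ℝ := 1 + ∑ j', |(lam j').re| with hLdef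
  have hLpos : 0 < L := by
    have : (0:ℝ) ≤ ∑ j', |(lam j').re| := Finset.sum_nonneg fun _ _ => abs_nonneg _
    rw [hLdef]; linarith
  have hLb : ∀ j', |(lam j').re| ≤ L := by
    intro j'
    have h1 : |(lam j').re| ≤ ∑ l, |(lam l).re| :=
      Finset.single_le_sum (f := fun l => |(lam l).re|) (fun _ _ => abs_nonneg _)
        (Finset.mem_univ j')
    rw [hLdef]; linarith
  set t₀ : ℝ := Real.log 2 / L with ht₀def
  have ht₀ : 0 < t₀ := div_pos (Real.log_pos one_lt_two) hLpos
  have hexp2 : ∀ t : ℝ, |t| ≤ t₀ → ∀ j', ‖Complex.exp ((t:ℂ) * lam j')‖ ≤ 2 := by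
    intro t ht j'
    rw [Complex.norm_exp]
    have hre : ((t:ℂ) * lam j').re = t * (lam j').re := by simp [Complex.mul_re]
    rw [hre]
    have h1 : t * (lam j').re ≤ |t| * |(lam j').re| := by
      calc t * (lam j').re ≤ |t * (lam j').re| := le_abs_self _
        _ = |t| * |(lam j').re| := abs_mul _ _
    have h2 : |t| * |(lam j').re| ≤ t₀ * L :=
      mul_le_mul ht (hLb j') (abs_nonneg _) (le_of_lt ht₀)
    have h3 : t₀ * L = Real.log 2 := div_mul_cancel₀ _ (ne_of_gt hLpos)
    calc Real.exp (t * (lam j').re) ≤ Real.exp (Real.log 2) :=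
          Real.exp_le_exp.2 (by rw [← h3]; exact le_trans h1 h2)
      _ = 2 := Real.exp_log two_pos
  -- membership of the flowed torus in the domain
  have hmem : ∀ (ρv : Fin n → ℝ), (∀ l, 0 ≤ ρv l ∧ ρv l ≤ δ''/4) →
      ∀ (t : ℝ), |t| ≤ t₀ → ∀ θ : TT d n,
        flow ω lam t (zpt ρv θ) ∈ domSet d n r'' δ'' := by
    intro ρv hρv t ht θ
    constructor
    · intro j
      have him : ((flow ω lam t (zpt ρv θ)).1 j).im = 0 := by
        show ((zpt ρv θ).1 j + (t:ℂ) * ((ω j : ℝ):ℂ)).im = 0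
        simp [zpt, Complex.add_im, Complex.mul_im]
      rw [him]
      simpa using hr''
    · intro j'
      show ‖Complex.exp ((t:ℂ) * lam j') * (zpt ρv θ).2 j'‖ < δ''
      rw [norm_mul]
      have h1 : ‖(zpt ρv θ).2 j'‖ ≤ δ''/4 := by
        show ‖(ρv j' : ℂ) * Complex.exp (Complex.I * _)‖ ≤ δ''/4
        rw [norm_mul, norm_exp_I_mul_ofReal, Complex.norm_real,
          Real.norm_of_nonneg (hρv j').1, mul_one]
        exact (hρv j').2
      have h2 : ‖Complex.exp ((t:ℂ) * lam j')‖ * ‖(zpt ρv θ).2 j'‖ ≤ 2 * (δ''/4) :=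
        mul_le_mul (hexp2 t ht j') h1 (norm_nonneg _) (by norm_num)
      calc ‖Complex.exp ((t:ℂ) * lam j')‖ * ‖(zpt ρv θ).2 j'‖ ≤ 2 * (δ''/4) := h2
        _ < δ'' := by linarith
  set ρA : Fin n → ℝ := fun _ => δ''/4 with hρAdef
  have hρA : ∀ l, 0 ≤ ρA l ∧ ρA l ≤ δ''/4 := fun l => ⟨by positivity, le_refl _⟩
  have hρA0 : ∀ l, 0 ≤ ρA l := fun l => (hρA l).1
  have hCne : (((2*Real.pi)^(d+n) : ℝ) : ℂ) ≠ 0 := by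
    have : (0:ℝ) < (2*Real.pi)^(d+n) := by positivity
    exact_mod_cast ne_of_gt this
  have hKAne : ∀ Q₀ : Fin n → ℕ, (∏ l, ((ρA l : ℝ):ℂ) ^ Q₀ l) ≠ 0 := by
    intro Q₀
    apply Finset.prod_ne_zero_iff.2
    intro l _
    apply pow_ne_zero
    have : (0:ℝ) < ρA l := by rw [hρAdef]; positivity
    exact_mod_cast ne_of_gt this
  have h0le : |(0:ℝ)| ≤ t₀ := by simpa using le_of_lt ht₀
  constructor
  · -- X components
    intro j P₀ Q₀ he0
    -- twisted expansions
    have hgt : ∀ t : ℝ, |t| ≤ t₀ → ∀ θ : TT d n,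
        HasSum (fun PQ : (Fin d → ℤ) × (Fin n → ℕ) =>
          (e.X j PQ.1 PQ.2 * Complex.exp ((t:ℂ) * eigen ω lam PQ.1 PQ.2))
            * monomial PQ.1 PQ.2 (zpt ρA θ))
          (realize (R.X j) (realizeMap Φ (zpt ρA θ))) := by
      intro t ht θ
      have h1 := heX j (flow ω lam t (zpt ρA θ)) (hmem ρA hρA t ht θ)
      simp only [realizeMap_flow hΦres, realize_flow_res (hRres.1 j), monomial_flow,
        ← mul_assoc] at h1
      exact h1
    have hint : ∀ t : ℝ, |t| ≤ t₀ →
        (∫ θ : TT d n, (realize (R.X j) (realizeMap Φ (zpt ρA θ))) * wgt P₀ Q₀ θ)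
          = (e.X j P₀ Q₀ * Complex.exp ((t:ℂ) * eigen ω lam P₀ Q₀))
              * (∏ l, ((ρA l : ℝ):ℂ) ^ Q₀ l) * (((2*Real.pi)^(d+n) : ℝ) : ℂ) := by
      intro t ht
      exact extract (fun P Q => e.X j P Q * Complex.exp ((t:ℂ) * eigen ω lam P Q)) ρA hρA0
        _ (hgt t ht) P₀ Q₀
    have hcomp : ∀ t : ℝ, |t| ≤ t₀ →
        Complex.exp ((t:ℂ) * eigen ω lam P₀ Q₀) = Complex.exp ((t:ℂ) * 0) := by
      intro t ht
      have h1 := (hint t ht).symm.trans (hint 0 h0le)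
      simp only [Complex.ofReal_zero, zero_mul, Complex.exp_zero, mul_one] at h1
      have h2 := mul_right_cancel₀ hCne h1
      have h3 := mul_right_cancel₀ (hKAne Q₀) h2
      rw [mul_zero, Complex.exp_zero]
      exact mul_left_cancel₀ he0 (h3.trans (mul_one _).symm)
    exact eq_of_exp_eq _ _ t₀ ht₀ hcomp
  · -- Y components
    intro j' P₀ Q₀ he0
    have hQ0 : Q₀ j' ≠ 0 := by
      intro hQ0
      set ρB : Fin n → ℝ := fun l => if l = j' then 0 else δ''/4 with hρBdef
      have hρB : ∀ l, 0 ≤ ρB l ∧ ρB l ≤ δ''/4 := by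
        intro l
        rw [hρBdef]
        by_cases h : l = j' <;> simp [h] <;> positivity
      have hg0 : ∀ θ : TT d n,
          HasSum (fun PQ : (Fin d → ℤ) × (Fin n → ℕ) =>
            e.Y j' PQ.1 PQ.2 * monomial PQ.1 PQ.2 (zpt ρB θ)) 0 := by
        intro θ
        have hmemB := hmem ρB hρB 0 h0le θ
        rw [flow_zero] at hmemB
        have h1 := heY j' (zpt ρB θ) hmemB
        have hz2 : (zpt ρB θ).2 j' = 0 := by
          show (ρB j' : ℂ) * _ = 0
          rw [hρBdef]
          simp
        have hPhiY : (realizeMap Φ (zpt ρB θ)).2 j' = 0 :=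
          realize_zero_of_Y (hΦres.2 j') _ hz2
        have hval : realize (R.Y j') (realizeMap Φ (zpt ρB θ)) = 0 :=
          realize_zero_of_Y (hRres.2 j') _ hPhiY
        simpa only [hval] using h1
      have hext := extract (e.Y j') ρB (fun l => (hρB l).1) (fun _ => 0) hg0 P₀ Q₀
      simp only [zero_mul, integral_zero] at hext
      have hKBne : (∏ l, ((ρB l : ℝ):ℂ) ^ Q₀ l) ≠ 0 := by
        apply Finset.prod_ne_zero_iff.2
        intro l _
        by_cases h : l = j'
        · subst h
          rw [hρBdef, hQ0]
          simp
        · apply pow_ne_zero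
          rw [hρBdef]
          simp only [h, if_false]
          have : (0:ℝ) < δ''/4 := by positivity
          exact_mod_cast ne_of_gt this
      have : e.Y j' P₀ Q₀ = 0 := by
        by_contra hne
        exact (mul_ne_zero (mul_ne_zero hne hKBne) hCne) hext.symm
      exact he0 this
    refine ⟨hQ0, ?_⟩
    have hgt : ∀ t : ℝ, |t| ≤ t₀ → ∀ θ : TT d n,
        HasSum (fun PQ : (Fin d → ℤ) × (Fin n → ℕ) =>
          (e.Y j' PQ.1 PQ.2 * Complex.exp ((t:ℂ) * eigen ω lam PQ.1 PQ.2))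
            * monomial PQ.1 PQ.2 (zpt ρA θ))
          (Complex.exp ((t:ℂ) * lam j')
            * realize (R.Y j') (realizeMap Φ (zpt ρA θ))) := by
      intro t ht θ
      have h1 := heY j' (flow ω lam t (zpt ρA θ)) (hmem ρA hρA t ht θ)
      simp only [realizeMap_flow hΦres, realize_flow_resY (hRres.2 j'), monomial_flow,
        ← mul_assoc] at h1
      exact h1
    have hint : ∀ t : ℝ, |t| ≤ t₀ →
        Complex.exp ((t:ℂ) * lam j')
            * (∫ θ : TT d n, (realize (R.Y j') (realizeMap Φ (zpt ρA θ))) * wgt P₀ Q₀ θ)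
          = (e.Y j' P₀ Q₀ * Complex.exp ((t:ℂ) * eigen ω lam P₀ Q₀))
              * (∏ l, ((ρA l : ℝ):ℂ) ^ Q₀ l) * (((2*Real.pi)^(d+n) : ℝ) : ℂ) := by
      intro t ht
      have hx := extract (fun P Q => e.Y j' P Q * Complex.exp ((t:ℂ) * eigen ω lam P Q)) ρA hρA0
        (fun θ => Complex.exp ((t:ℂ) * lam j')
          * realize (R.Y j') (realizeMap Φ (zpt ρA θ))) (hgt t ht) P₀ Q₀
      rw [← hx, ← MeasureTheory.integral_const_mul]
      congr 1
      funext θ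
      ring
    have hcomp : ∀ t : ℝ, |t| ≤ t₀ →
        Complex.exp ((t:ℂ) * eigen ω lam P₀ Q₀) = Complex.exp ((t:ℂ) * lam j') := by
      intro t ht
      have h0 := hint 0 h0le
      simp only [Complex.ofReal_zero, zero_mul, Complex.exp_zero, mul_one, one_mul] at h0
      have h1 := hint t ht
      rw [h0] at h1
      have hKC : ((∏ l : Fin n, ((ρA l : ℝ):ℂ) ^ Q₀ l) * (((2*Real.pi)^(d+n) : ℝ):ℂ)) ≠ 0 :=
        mul_ne_zero (hKAne Q₀) hCne
      have h2 : (Complex.exp ((t:ℂ) * lam j') * e.Y j' P₀ Q₀)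
            * ((∏ l : Fin n, ((ρA l : ℝ):ℂ) ^ Q₀ l) * (((2*Real.pi)^(d+n) : ℝ):ℂ))
          = (Complex.exp ((t:ℂ) * eigen ω lam P₀ Q₀) * e.Y j' P₀ Q₀)
            * ((∏ l : Fin n, ((ρA l : ℝ):ℂ) ^ Q₀ l) * (((2*Real.pi)^(d+n) : ℝ):ℂ)) := by
        linear_combination h1
      have h3 := mul_right_cancel₀ hKC h2
      exact (mul_right_cancel₀ he0 h3).symm
    exact eq_of_exp_eq _ _ t₀ ht₀ hcomp


end Aux

end Brjuno
end

section
/- Let R be a formal resonant vector field and Φ a resonant analytic diffeomorphism tangent to the identity (both on a neighborhood of 𝕋^d×{0} in (ℂ^d/2πℤ^d)×ℂ^n). Then DΦ·R is a formal resonant vector field. -/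
open scoped BigOperators

namespace Brjuno

variable {d n : ℕ}

lemma eigen_add (ω : Fin d → ℝ) (lam : Fin n → ℂ) (P1 P2 : Fin d → ℤ) (Q1 Q2 : Fin n → ℕ) :
    eigen ω lam (P1 + P2) (Q1 + Q2) = eigen ω lam P1 Q1 + eigen ω lam P2 Q2 := by
  simp only [eigen, Pi.add_apply]
  push_cast
  rw [Finset.sum_congr rfl (fun j _ => add_mul (P1 j : ℂ) (P2 j) (ω j)),
    Finset.sum_congr rfl (fun j _ => add_mul (Q1 j : ℂ) (Q2 j) (lam j)),
    Finset.sum_add_distrib, Finset.sum_add_distrib]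
  ring

lemma eigen_split (ω : Fin d → ℝ) (lam : Fin n → ℂ) (P P' : Fin d → ℤ) (Q Q' : Fin n → ℕ)
    (h : Q' ≤ Q) :
    eigen ω lam P Q = eigen ω lam P' Q' + eigen ω lam (P - P') (Q - Q') := by
  have hP : P' + (P - P') = P := by funext i; simp
  have hQ : Q' + (Q - Q') = Q := by funext i; exact Nat.add_sub_cancel' (h i)
  rw [← eigen_add, hP, hQ]

lemma eigen_add_single (ω : Fin d → ℝ) (lam : Fin n → ℂ) (P : Fin d → ℤ) (Q : Fin n → ℕ)
    (l : Fin n) :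
    eigen ω lam P (Q + Pi.single l 1) = eigen ω lam P Q + lam l := by
  have : eigen ω lam (P + 0) (Q + Pi.single l 1) = eigen ω lam P Q + eigen ω lam 0 (Pi.single l 1) :=
    eigen_add ω lam P 0 Q (Pi.single l 1)
  rw [add_zero] at this
  rw [this]
  congr 1
  simp only [eigen, Pi.zero_apply, Int.cast_zero, zero_mul, Finset.sum_const_zero, mul_zero,
    zero_add]
  rw [Finset.sum_eq_single l]
  · simp
  · intro b _ hb; simp [Pi.single_apply, hb]
  · simp

lemma fmul_eq_zero (f g : Coef d n) (P : Fin d → ℤ) (Q : Fin n → ℕ)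
    (h : ∀ P' Q', Q' ≤ Q → f P' Q' * g (P - P') (Q - Q') = 0) :
    fmul f g P Q = 0 := by
  unfold fmul
  have : ∀ P', ∑ Q' ∈ Finset.Iic Q, f P' Q' * g (P - P') (Q - Q') = 0 := fun P' =>
    Finset.sum_eq_zero fun Q' hQ' => h P' Q' (Finset.mem_Iic.mp hQ')
  simp [this]

/-- Lemma `prodres`: if `R` is a formal resonant vector field and `Φ` a
resonant analytic diffeomorphism tangent to the identity, then `DΦ·R` is a formal
resonant vector field. -/
theorem dphi_dot_resonant (d n : ℕ) (ω : Fin d → ℝ) (lam : Fin n → ℂ)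
    (r δ : ℝ) (hr : 0 < r) (hδ : 0 < δ)
    (Φ : CDiffeo d n)
    (hΦsumX : ∀ j, WSummable r δ (Φ.X j)) (hΦsumY : ∀ j', WSummable r δ (Φ.Y j'))
    (hΦdiff : DifferentiableOn ℂ (realizeMap Φ) (domSet d n r δ))
    (hΦinj : Set.InjOn (realizeMap Φ) (domSet d n r δ))
    (hΦres : CDiffeo.Resonant ω lam Φ) (hΦtan : TangentId Φ)
    (R : CVF d n) (hRformal : CVF.Formal R) (hRres : CVF.Resonant ω lam R) :
    CVF.Resonant ω lam (DphiDotF Φ R) := by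
  obtain ⟨hΦresX, hΦresY⟩ := hΦres
  obtain ⟨hRresX, hRresY⟩ := hRres
  constructor
  · intro j P Q hne
    by_contra h0
    apply hne
    show R.X j P Q + (∑ m, fmul (dXc m (Φ.X j)) (R.X m) P Q)
      + ∑ l, fmul (dYc l (Φ.X j)) (R.Y l) P Q = 0
    have h1 : R.X j P Q = 0 := by
      by_contra h; exact h0 (hRresX j P Q h)
    have h2 : ∀ m, fmul (dXc m (Φ.X j)) (R.X m) P Q = 0 := by
      intro m
      apply fmul_eq_zero
      intro P' Q' hQ'
      by_contra hterm
      have hf : dXc m (Φ.X j) P' Q' ≠ 0 := left_ne_zero_of_mul hterm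
      have hg : R.X m (P - P') (Q - Q') ≠ 0 := right_ne_zero_of_mul hterm
      have hΦ : Φ.X j P' Q' ≠ 0 := by
        intro h; exact hf (by simp [dXc, h])
      apply h0
      rw [eigen_split ω lam P P' Q Q' hQ', hΦresX j P' Q' hΦ, hRresX m _ _ hg, add_zero]
    have h3 : ∀ l, fmul (dYc l (Φ.X j)) (R.Y l) P Q = 0 := by
      intro l
      apply fmul_eq_zero
      intro P' Q' hQ'
      by_contra hterm
      have hf : dYc l (Φ.X j) P' Q' ≠ 0 := left_ne_zero_of_mul hterm
      have hg : R.Y l (P - P') (Q - Q') ≠ 0 := right_ne_zero_of_mul hterm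
      have hΦ : Φ.X j P' (Q' + Pi.single l 1) ≠ 0 := by
        intro h; exact hf (by simp [dYc, h])
      have e1 : eigen ω lam P' Q' + lam l = 0 := by
        rw [← eigen_add_single ω lam P' Q' l]; exact hΦresX j _ _ hΦ
      have e2 := (hRresY l _ _ hg).2
      apply h0
      rw [eigen_split ω lam P P' Q Q' hQ', e2]
      exact e1
    rw [h1, Finset.sum_eq_zero (fun m _ => h2 m), Finset.sum_eq_zero (fun l _ => h3 l)]
    simp
  · intro j' P Q hne
    by_contra h0
    apply hne
    show (∑ m, fmul (dXc m (Φ.Y j')) (R.X m) P Q)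
      + ∑ l, fmul (dYc l (Φ.Y j')) (R.Y l) P Q = 0
    have h2 : ∀ m, fmul (dXc m (Φ.Y j')) (R.X m) P Q = 0 := by
      intro m
      apply fmul_eq_zero
      intro P' Q' hQ'
      by_contra hterm
      have hf : dXc m (Φ.Y j') P' Q' ≠ 0 := left_ne_zero_of_mul hterm
      have hg : R.X m (P - P') (Q - Q') ≠ 0 := right_ne_zero_of_mul hterm
      have hΦ : Φ.Y j' P' Q' ≠ 0 := by
        intro h; exact hf (by simp [dXc, h])
      obtain ⟨hq, he⟩ := hΦresY j' P' Q' hΦ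
      apply h0
      constructor
      · have hle : Q' j' ≤ Q j' := hQ' j'
        omega
      · rw [eigen_split ω lam P P' Q Q' hQ', he, hRresX m _ _ hg, add_zero]
    have h3 : ∀ l, fmul (dYc l (Φ.Y j')) (R.Y l) P Q = 0 := by
      intro l
      apply fmul_eq_zero
      intro P' Q' hQ'
      by_contra hterm
      have hf : dYc l (Φ.Y j') P' Q' ≠ 0 := left_ne_zero_of_mul hterm
      have hg : R.Y l (P - P') (Q - Q') ≠ 0 := right_ne_zero_of_mul hterm
      have hΦ : Φ.Y j' P' (Q' + Pi.single l 1) ≠ 0 := by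
        intro h; exact hf (by simp [dYc, h])
      obtain ⟨hq, he⟩ := hΦresY j' _ _ hΦ
      obtain ⟨hql, hel⟩ := hRresY l _ _ hg
      rw [eigen_add_single ω lam P' Q' l] at he
      apply h0
      constructor
      · -- Q j' ≠ 0
        rcases eq_or_ne l j' with rfl | hne'
        · have hql' : Q l - Q' l ≠ 0 := hql
          have hle : Q' l ≤ Q l := hQ' l
          omega
        · have hq' : Q' j' ≠ 0 := by
            simpa [Pi.single_apply, Ne.symm hne'] using hq
          have hle : Q' j' ≤ Q j' := hQ' j'
          omega
      · rw [eigen_split ω lam P P' Q Q' hQ', hel]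
        linear_combination he
    rw [Finset.sum_eq_zero (fun m _ => h2 m), Finset.sum_eq_zero (fun l _ => h3 l)]
    simp

end Brjuno
end
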